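/- arXiv:2201.01037 — 4 statements merged into one kernel-verified Lean document; each statement's English description precedes it below -/
import Mathlib

section
/- Let F be a natural number with F ≥ 1 and let γ > 0 be a real number. Define the cache hit ratio p_h(C) = (∑_{f=1}^{C} f^(−γ)) / (∑_{g=1}^{F} g^(−γ)) for natural numbers C with 0 ≤ C ≤ F. Then for all natural numbers C₁ ≤ C₂ ≤ F and all real numbers x ≥ 0, y ≥ 0: min((1 − p_h(C₁))·x, (1 − p_h(C₁))·y) + p_h(C₁)·y ≤ min((1 − p_h(C₂))·x, (1 − p_h(C₂))·y) + p_h(C₂)·y. -/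
theorem stmt_1 (F : ℕ) (hF : 1 ≤ F) (γ : ℝ) (hγ : 0 < γ)
    (p_h : ℕ → ℝ)
    (hp : ∀ C : ℕ, p_h C =
      (∑ f ∈ Finset.Icc 1 C, (f : ℝ) ^ (-γ)) / (∑ g ∈ Finset.Icc 1 F, (g : ℝ) ^ (-γ)))
    (C₁ C₂ : ℕ) (h12 : C₁ ≤ C₂) (h2F : C₂ ≤ F)
    (x y : ℝ) (hx : 0 ≤ x) (hy : 0 ≤ y) :
    min ((1 - p_h C₁) * x) ((1 - p_h C₁) * y) + p_h C₁ * y ≤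
      min ((1 - p_h C₂) * x) ((1 - p_h C₂) * y) + p_h C₂ * y := by
  set S : ℕ → ℝ := fun C => ∑ f ∈ Finset.Icc 1 C, (f : ℝ) ^ (-γ) with hS
  have hterm : ∀ f ∈ Finset.Icc 1 F, (0:ℝ) < (f : ℝ) ^ (-γ) := by
    intro f hf
    have : (0:ℝ) < f := by
      have := (Finset.mem_Icc.mp hf).1
      exact_mod_cast Nat.lt_of_lt_of_le Nat.zero_lt_one this
    positivity
  have hD : 0 < S F := by
    apply Finset.sum_pos hterm
    exact ⟨1, Finset.mem_Icc.mpr ⟨le_refl 1, hF⟩⟩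
  have hmono : ∀ {a b : ℕ}, a ≤ b → b ≤ F → S a ≤ S b := by
    intro a b hab hbF
    apply Finset.sum_le_sum_of_subset_of_nonneg
    · exact Finset.Icc_subset_Icc_right hab
    · intro i hi _
      exact le_of_lt (hterm i (Finset.Icc_subset_Icc_right hbF hi))
  have hSnonneg : ∀ a : ℕ, 0 ≤ S a := by
    intro a
    apply Finset.sum_nonneg
    intro i hi
    have : (1:ℕ) ≤ i := (Finset.mem_Icc.mp hi).1
    have h0 : (0:ℝ) < i := by exact_mod_cast Nat.lt_of_lt_of_le Nat.zero_lt_one this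
    positivity
  set p := p_h C₁
  set q := p_h C₂
  have hp0 : 0 ≤ p := by
    rw [show p = p_h C₁ from rfl, hp C₁]
    exact div_nonneg (hSnonneg C₁) hD.le
  have hpq : p ≤ q := by
    rw [show p = p_h C₁ from rfl, show q = p_h C₂ from rfl, hp C₁, hp C₂]
    exact div_le_div_of_nonneg_right (hmono h12 h2F) hD.le
  have hq1 : q ≤ 1 := by
    rw [show q = p_h C₂ from rfl, hp C₂]
    rw [div_le_one hD]
    exact hmono h2F le_rfl
  have h1p : 0 ≤ 1 - p := by linarith
  have h1q : 0 ≤ 1 - q := by linarith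
  rcases le_total x y with hxy | hxy
  · rw [min_eq_left (by nlinarith), min_eq_left (by nlinarith)]
    nlinarith [mul_nonneg (sub_nonneg.mpr hpq) (sub_nonneg.mpr hxy)]
  · rw [min_eq_right (by nlinarith), min_eq_right (by nlinarith)]
    nlinarith
end

section
/- Let C and F be natural numbers with 1 ≤ C < F, and let γ₁ and γ₂ be real numbers with 0 < γ₁ < γ₂. Then (∑_{g=C+1}^{F} g^(−γ₂)) · (∑_{f=1}^{C} f^(−γ₁)) < (∑_{g=C+1}^{F} g^(−γ₁)) · (∑_{f=1}^{C} f^(−γ₂)). -/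
theorem stmt_3 (C F : ℕ) (hC : 1 ≤ C) (hCF : C < F)
    (γ₁ γ₂ : ℝ) (hγ₁ : 0 < γ₁) (hγ : γ₁ < γ₂) :
    (∑ g ∈ Finset.Icc (C + 1) F, (g : ℝ) ^ (-γ₂)) *
        (∑ f ∈ Finset.Icc 1 C, (f : ℝ) ^ (-γ₁)) <
      (∑ g ∈ Finset.Icc (C + 1) F, (g : ℝ) ^ (-γ₁)) *
        (∑ f ∈ Finset.Icc 1 C, (f : ℝ) ^ (-γ₂)) := by
  rw [Finset.sum_mul_sum, Finset.sum_mul_sum]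
  apply Finset.sum_lt_sum_of_nonempty
  · exact Finset.nonempty_Icc.mpr hCF
  intro g hg
  apply Finset.sum_lt_sum_of_nonempty
  · exact Finset.nonempty_Icc.mpr hC
  intro f hf
  simp only [Finset.mem_Icc] at hg hf
  have hf1 : (1 : ℝ) ≤ f := by exact_mod_cast hf.1
  have hfg : (f : ℝ) < g := by
    have : f < g := lt_of_le_of_lt hf.2 (Nat.lt_of_succ_le hg.1)
    exact_mod_cast this
  have hf0 : (0 : ℝ) < f := lt_of_lt_of_le one_pos hf1
  have hg0 : (0 : ℝ) < g := lt_trans hf0 hfg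
  -- goal: g^(-γ₂) * f^(-γ₁) < g^(-γ₁) * f^(-γ₂)
  have key : ((f : ℝ) / g) ^ γ₂ < ((f : ℝ) / g) ^ γ₁ :=
    Real.rpow_lt_rpow_of_exponent_gt (div_pos hf0 hg0) ((div_lt_one hg0).mpr hfg) hγ
  rw [Real.div_rpow hf0.le hg0.le, Real.div_rpow hf0.le hg0.le,
    div_lt_div_iff₀ (Real.rpow_pos_of_pos hg0 _) (Real.rpow_pos_of_pos hg0 _)] at key
  rw [Real.rpow_neg hg0.le, Real.rpow_neg hf0.le, Real.rpow_neg hg0.le, Real.rpow_neg hf0.le,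
    ← mul_inv, ← mul_inv, inv_lt_inv₀ (by positivity) (by positivity)]
  linarith [key]
end

section
/- Let C and F be natural numbers with 1 ≤ C < F, and let γ₁ and γ₂ be real numbers with 0 < γ₁ < γ₂. Define p_h(C, γ) = (∑_{f=1}^{C} f^(−γ)) / (∑_{g=1}^{F} g^(−γ)). Then p_h(C, γ₁) < p_h(C, γ₂); that is, the cache hit ratio is strictly increasing in the Zipf skewness parameter. -/
lemma aux_term (a b γ₁ γ₂ : ℝ) (ha : 1 ≤ a) (hab : a < b) (hγ : γ₁ < γ₂) :
    a ^ (-γ₁) * b ^ (-γ₂) < a ^ (-γ₂) * b ^ (-γ₁) := by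
  have ha0 : 0 < a := lt_of_lt_of_le one_pos ha
  have hb0 : 0 < b := lt_trans ha0 hab
  have h : b ^ (γ₁ - γ₂) < a ^ (γ₁ - γ₂) :=
    Real.rpow_lt_rpow_of_neg ha0 hab (by linarith)
  have hA1 : (0:ℝ) < a ^ (-γ₁) := Real.rpow_pos_of_pos ha0 _
  have hB1 : (0:ℝ) < b ^ (-γ₁) := Real.rpow_pos_of_pos hb0 _
  calc a ^ (-γ₁) * b ^ (-γ₂) = a ^ (-γ₁) * (b ^ (γ₁ - γ₂) * b ^ (-γ₁)) := by
        rw [← Real.rpow_add hb0]; ring_nf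
    _ < a ^ (-γ₁) * (a ^ (γ₁ - γ₂) * b ^ (-γ₁)) := by
        have := mul_lt_mul_of_pos_right h hB1
        exact mul_lt_mul_of_pos_left this hA1
    _ = a ^ (-γ₂) * b ^ (-γ₁) := by
        rw [mul_comm (a ^ (γ₁ - γ₂)) (b ^ (-γ₁)), ← mul_assoc, mul_comm (a ^ (-γ₁)),
          mul_assoc, ← Real.rpow_add ha0]
        ring_nf

theorem stmt_4 (C F : ℕ) (hC : 1 ≤ C) (hCF : C < F)
    (γ₁ γ₂ : ℝ) (hγ₁ : 0 < γ₁) (hγ : γ₁ < γ₂)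
    (p_h : ℕ → ℝ → ℝ)
    (hp : ∀ (C : ℕ) (γ : ℝ), p_h C γ =
      (∑ f ∈ Finset.Icc 1 C, (f : ℝ) ^ (-γ)) / (∑ g ∈ Finset.Icc 1 F, (g : ℝ) ^ (-γ))) :
    p_h C γ₁ < p_h C γ₂ := by
  rw [hp, hp]
  set S₁ := ∑ f ∈ Finset.Icc 1 C, (f : ℝ) ^ (-γ₁) with hS₁
  set S₂ := ∑ f ∈ Finset.Icc 1 C, (f : ℝ) ^ (-γ₂) with hS₂
  set T₁ := ∑ g ∈ Finset.Icc (C+1) F, (g : ℝ) ^ (-γ₁) with hT₁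
  set T₂ := ∑ g ∈ Finset.Icc (C+1) F, (g : ℝ) ^ (-γ₂) with hT₂
  have hCne : (Finset.Icc 1 C).Nonempty := ⟨1, by simp [hC]⟩
  have hTne : (Finset.Icc (C+1) F).Nonempty := ⟨C+1, by simp; omega⟩
  have pos : ∀ (s : Finset ℕ) (γ : ℝ), (∀ n ∈ s, 1 ≤ n) → s.Nonempty →
      (0:ℝ) < ∑ f ∈ s, (f : ℝ) ^ (-γ) := by
    intro s γ h1 hne
    apply Finset.sum_pos
    · intro n hn
      exact Real.rpow_pos_of_pos (by exact_mod_cast h1 n hn) _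
    · exact hne
  have hS₁pos : 0 < S₁ := pos _ _ (fun n hn => (Finset.mem_Icc.mp hn).1) hCne
  have hS₂pos : 0 < S₂ := pos _ _ (fun n hn => (Finset.mem_Icc.mp hn).1) hCne
  have hT₁pos : 0 < T₁ := pos _ _ (fun n hn => le_trans (by omega) (Finset.mem_Icc.mp hn).1) hTne
  have hT₂pos : 0 < T₂ := pos _ _ (fun n hn => le_trans (by omega) (Finset.mem_Icc.mp hn).1) hTne
  have hsplit : ∀ γ : ℝ, ∑ g ∈ Finset.Icc 1 F, (g : ℝ) ^ (-γ) =
      (∑ f ∈ Finset.Icc 1 C, (f : ℝ) ^ (-γ)) + ∑ g ∈ Finset.Icc (C+1) F, (g : ℝ) ^ (-γ) := by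
    intro γ
    rw [← Finset.sum_union]
    · congr 1
      ext n
      simp only [Finset.mem_union, Finset.mem_Icc]
      omega
    · rw [Finset.disjoint_left]
      intro n hn hn'
      simp only [Finset.mem_Icc] at hn hn'
      omega
  rw [hsplit γ₁, hsplit γ₂, ← hS₁, ← hS₂, ← hT₁, ← hT₂]
  rw [div_lt_div_iff₀ (by linarith) (by linarith)]
  have key : S₁ * T₂ < S₂ * T₁ := by
    rw [Finset.sum_mul_sum, Finset.sum_mul_sum]
    apply Finset.sum_lt_sum_of_nonempty hCne
    intro f hf
    apply Finset.sum_lt_sum_of_nonempty hTne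
    intro g hg
    have hf1 : 1 ≤ f := (Finset.mem_Icc.mp hf).1
    have hfC : f ≤ C := (Finset.mem_Icc.mp hf).2
    have hgC : C + 1 ≤ g := (Finset.mem_Icc.mp hg).1
    exact aux_term (f : ℝ) (g : ℝ) γ₁ γ₂ (by exact_mod_cast hf1)
      (by exact_mod_cast (by omega : f < g)) hγ
  nlinarith [key, hS₁pos, hS₂pos, hT₁pos, hT₂pos]
end

section
/- Let λ, β, ξ, A_L, A_NL, α_L, α_NL be strictly positive real numbers. Define λ(φ) = (2·π·λ·A_NL/α_NL)·(A_NL·φ)^(2/α_NL − 1) + (2·π·λ·A_L/α_L)·(A_L·φ)^(2/α_L − 1)·exp(−β·(A_L·φ)^(1/α_L)) − (2·π·λ·A_NL/α_NL)·(A_NL·φ)^(2/α_NL − 1)·exp(−β·(A_NL·φ)^(1/α_NL)) for φ > 0, and define H_i = (A_i^(2/α_i)/α_i)·∫_0^∞ φ^(2/α_i)·exp(−β·(A_i·φ)^(1/α_i) − φ/ξ) dφ for i ∈ {L, NL}. Then ∫_0^∞ λ(φ)·(φ/ξ²)·exp(−φ/ξ) dφ = (2·π·λ·A_NL^(2/α_NL)/α_NL)·ξ^(2/α_NL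 − 1)·Γ(2/α_NL + 1) + (2·π·λ/ξ²)·(H_L − H_NL), where Γ denotes the real Gamma function. -/
/-! On `φ > 0` the kernel's factor `φ` absorbs the exponent shift,
`A * (A * φ) ^ (2 / α - 1) * φ = A ^ (2 / α) * φ ^ (2 / α)`, so the integrand splits into three
multiples of `φ ^ (2 / α) * exp (-(φ / ξ))`, two of them damped by a LOS factor
`exp (-(β * (A * φ) ^ (1 / α))) ≤ 1` and hence integrable by comparison with the undamped one.
The undamped term is the Gamma integral `ξ ^ (2 / α + 1) * Γ (2 / α + 1)`; the damped ones give
`H_L` and `H_NL`. -/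

open Real MeasureTheory Set

section GammaIntegrand

variable {c ξ : ℝ}

lemma integrableOn_rpow_mul_exp_neg_div_Ioi (hc : -1 < c) (hξ : 0 < ξ) :
    IntegrableOn (fun x : ℝ => x ^ c * exp (-(x / ξ))) (Ioi 0) := by
  refine (integrableOn_rpow_mul_exp_neg_mul_rpow hc one_pos (inv_pos.2 hξ)).congr_fun
    (fun x _ => ?_) measurableSet_Ioi
  simp only [rpow_one, neg_mul, inv_mul_eq_div]

lemma integral_rpow_mul_exp_neg_div_Ioi (hc : -1 < c) (hξ : 0 < ξ) :
    ∫ x in Ioi (0 : ℝ), x ^ c * exp (-(x / ξ)) = ξ ^ (c + 1) * Gamma (c + 1) := by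
  have h := integral_rpow_mul_exp_neg_mul_Ioi (a := c + 1) (by linarith) (inv_pos.2 hξ)
  simpa only [add_sub_cancel_right, inv_mul_eq_div, one_div, inv_inv] using h

lemma integrableOn_rpow_mul_exp_neg_sub_div_Ioi {g : ℝ → ℝ} (hc : -1 < c) (hξ : 0 < ξ)
    (hg : Measurable g) (hg_nonneg : ∀ x > 0, 0 ≤ g x) :
    IntegrableOn (fun x : ℝ => x ^ c * exp (-g x - x / ξ)) (Ioi 0) := by
  refine (integrableOn_rpow_mul_exp_neg_div_Ioi hc hξ).mono' (by fun_prop) ?_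
  filter_upwards [self_mem_ae_restrict measurableSet_Ioi] with x (hx : 0 < x)
  rw [norm_of_nonneg (by positivity)]
  gcongr
  linarith [hg_nonneg x hx]

end GammaIntegrand

theorem stmt_13_general (lam β ξ A_L A_NL α_L α_NL : ℝ)
    (hβ : 0 < β) (hξ : 0 < ξ)
    (hAL : 0 < A_L) (hANL : 0 < A_NL) (hαL : 0 < α_L) (hαNL : 0 < α_NL)
    (dens : ℝ → ℝ)
    (hdens : ∀ φ > (0 : ℝ), dens φ =
      2 * π * lam * A_NL / α_NL * (A_NL * φ) ^ (2 / α_NL - 1) +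
        2 * π * lam * A_L / α_L * (A_L * φ) ^ (2 / α_L - 1) *
          Real.exp (-(β * (A_L * φ) ^ (1 / α_L))) -
        2 * π * lam * A_NL / α_NL * (A_NL * φ) ^ (2 / α_NL - 1) *
          Real.exp (-(β * (A_NL * φ) ^ (1 / α_NL))))
    (H_L H_NL : ℝ)
    (hHL : H_L = A_L ^ (2 / α_L) / α_L *
      ∫ φ in Set.Ioi (0 : ℝ), φ ^ (2 / α_L) *
        Real.exp (-(β * (A_L * φ) ^ (1 / α_L)) - φ / ξ))
    (hHNL : H_NL = A_NL ^ (2 / α_NL) / α_NL *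
      ∫ φ in Set.Ioi (0 : ℝ), φ ^ (2 / α_NL) *
        Real.exp (-(β * (A_NL * φ) ^ (1 / α_NL)) - φ / ξ)) :
    ∫ φ in Set.Ioi (0 : ℝ), dens φ * (φ / ξ ^ 2) * Real.exp (-(φ / ξ)) =
      2 * π * lam * A_NL ^ (2 / α_NL) / α_NL * ξ ^ (2 / α_NL - 1) *
          Real.Gamma (2 / α_NL + 1) +
        2 * π * lam / ξ ^ 2 * (H_L - H_NL) := by
  set p_L := 2 / α_L
  set p_NL := 2 / α_NL
  set E_L := fun φ : ℝ => φ ^ p_L * exp (-(β * (A_L * φ) ^ (1 / α_L)) - φ / ξ)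
  set E_NL := fun φ : ℝ => φ ^ p_NL * exp (-(β * (A_NL * φ) ^ (1 / α_NL)) - φ / ξ)
  set c_L := 2 * π * lam * A_L ^ p_L / (α_L * ξ ^ 2)
  set c_NL := 2 * π * lam * A_NL ^ p_NL / (α_NL * ξ ^ 2)
  have hp_L : -1 < p_L := neg_one_lt_zero.trans (div_pos two_pos hαL)
  have hp_NL : -1 < p_NL := neg_one_lt_zero.trans (div_pos two_pos hαNL)
  have hG := integrableOn_rpow_mul_exp_neg_div_Ioi hp_NL hξ
  have hE_L : IntegrableOn E_L (Ioi 0) :=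
    integrableOn_rpow_mul_exp_neg_sub_div_Ioi hp_L hξ (by fun_prop) fun x hx => by positivity
  have hE_NL : IntegrableOn E_NL (Ioi 0) :=
    integrableOn_rpow_mul_exp_neg_sub_div_Ioi hp_NL hξ (by fun_prop) fun x hx => by positivity
  have hsplit : EqOn (fun φ => dens φ * (φ / ξ ^ 2) * exp (-(φ / ξ)))
      (fun φ => c_NL * (φ ^ p_NL * exp (-(φ / ξ))) + c_L * E_L φ - c_NL * E_NL φ) (Ioi 0) := by
    intro φ (hφ : 0 < φ)
    simp only [hdens φ hφ, E_L, E_NL, c_L, c_NL, rpow_sub_one (mul_pos hAL hφ).ne',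
      rpow_sub_one (mul_pos hANL hφ).ne', mul_rpow hAL.le hφ.le, mul_rpow hANL.le hφ.le,
      exp_sub, exp_neg]
    field_simp
  rw [setIntegral_congr_fun measurableSet_Ioi hsplit,
    integral_sub (f := fun φ => c_NL * (φ ^ p_NL * exp (-(φ / ξ))) + c_L * E_L φ)
      ((hG.const_mul _).add (hE_L.const_mul _)) (hE_NL.const_mul _),
    integral_add (hG.const_mul _) (hE_L.const_mul _), integral_const_mul, integral_const_mul,
    integral_const_mul, integral_rpow_mul_exp_neg_div_Ioi hp_NL hξ, hHL, hHNL,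
    rpow_add_one hξ.ne', rpow_sub_one hξ.ne']
  simp only [c_L, c_NL]
  field_simp
  ring

theorem stmt_13 (lam β ξ A_L A_NL α_L α_NL : ℝ)
    (hlam : 0 < lam) (hβ : 0 < β) (hξ : 0 < ξ)
    (hAL : 0 < A_L) (hANL : 0 < A_NL) (hαL : 0 < α_L) (hαNL : 0 < α_NL)
    (dens : ℝ → ℝ)
    (hdens : ∀ φ > (0 : ℝ), dens φ =
      2 * π * lam * A_NL / α_NL * (A_NL * φ) ^ (2 / α_NL - 1) +
        2 * π * lam * A_L / α_L * (A_L * φ) ^ (2 / α_L - 1) *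
          Real.exp (-(β * (A_L * φ) ^ (1 / α_L))) -
        2 * π * lam * A_NL / α_NL * (A_NL * φ) ^ (2 / α_NL - 1) *
          Real.exp (-(β * (A_NL * φ) ^ (1 / α_NL))))
    (H_L H_NL : ℝ)
    (hHL : H_L = A_L ^ (2 / α_L) / α_L *
      ∫ φ in Set.Ioi (0 : ℝ), φ ^ (2 / α_L) *
        Real.exp (-(β * (A_L * φ) ^ (1 / α_L)) - φ / ξ))
    (hHNL : H_NL = A_NL ^ (2 / α_NL) / α_NL *
      ∫ φ in Set.Ioi (0 : ℝ), φ ^ (2 / α_NL) *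
        Real.exp (-(β * (A_NL * φ) ^ (1 / α_NL)) - φ / ξ)) :
    ∫ φ in Set.Ioi (0 : ℝ), dens φ * (φ / ξ ^ 2) * Real.exp (-(φ / ξ)) =
      2 * π * lam * A_NL ^ (2 / α_NL) / α_NL * ξ ^ (2 / α_NL - 1) *
          Real.Gamma (2 / α_NL + 1) +
        2 * π * lam / ξ ^ 2 * (H_L - H_NL) :=
  stmt_13_general lam β ξ A_L A_NL α_L α_NL hβ hξ hAL hANL hαL hαNL dens hdens H_L H_NL hHL hHNL
end
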